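/- Let k be a field of characteristic zero, let w and e be positive integers, and let β ∈ k. Suppose there exist nonzero polynomials p, q ∈ k[X] such that X·(1−X)·(p′·q − p·q′) = β·(w − (w+e)·X)·p·q in k[X]. Then there exist integers m and m′ such that β·w = m·1_k and β·e = m′·1_k; that is, both β·w and β·e are integers. -/
import Mathlib


open Polynomial

private lemma mul_derivative_pow {k : Type*} [Field k] (c : k) (n : ℕ) :
    (X - C c) * derivative ((X - C c) ^ n) = (n : k[X]) * (X - C c) ^ n := by
  cases n with
  | zero => simp
  | succ m =>
      rw [derivative_pow]
      simp only [derivative_sub, derivative_X, derivative_C, sub_zero, mul_one,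
        Nat.add_sub_cancel, C_eq_natCast]
      ring

private lemma ode_residue {k : Type*} [Field k] (c : k) (a b : ℕ) (P Q T R : k[X])
    (hP : P.eval c ≠ 0) (hQ : Q.eval c ≠ 0)
    (heq : (X - C c) * T *
        (derivative ((X - C c) ^ a * P) * ((X - C c) ^ b * Q)
          - ((X - C c) ^ a * P) * derivative ((X - C c) ^ b * Q))
      = R * ((X - C c) ^ a * P) * ((X - C c) ^ b * Q)) :
    T.eval c * ((a : k) - (b : k)) = R.eval c := by
  set u : k[X] := X - C c with hu_def
  have hu : u ≠ 0 := X_sub_C_ne_zero c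
  have h1 : u * derivative (u ^ a) = (a : k[X]) * u ^ a := mul_derivative_pow c a
  have h2 : u * derivative (u ^ b) = (b : k[X]) * u ^ b := mul_derivative_pow c b
  rw [derivative_mul, derivative_mul] at heq
  have key : u ^ (a + b) *
      (T * (((a : k[X]) - (b : k[X])) * P * Q
        + u * (derivative P * Q - P * derivative Q)))
      = u ^ (a + b) * (R * P * Q) := by
    linear_combination heq - T * P * u ^ b * Q * h1 + T * u ^ a * P * Q * h2
  have h3 := mul_left_cancel₀ (pow_ne_zero (a + b) hu) key
  have h4 := congrArg (eval c) h3
  simp only [eval_mul, eval_add, eval_sub, eval_natCast, hu_def, eval_X, eval_C,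
    sub_self, zero_mul, add_zero] at h4
  have h5 : T.eval c * ((a : k) - (b : k)) * (P.eval c * Q.eval c)
      = R.eval c * (P.eval c * Q.eval c) := by linear_combination h4
  exact mul_right_cancel₀ (mul_ne_zero hP hQ) h5

/-- If the nonzero rational function `p/q` satisfies the first-order differential
equation `X(1−X)·a′ = β·(w − (w+e)X)·a` (whose formal solutions are
`X^{βw}(1−X)^{βe}`), then both `β·w` and `β·e` are integers. -/
theorem rational_solution_integral_exponents
    (k : Type*) [Field k] [CharZero k]
    (w e : ℕ) (hw : 0 < w) (he : 0 < e) (β : k)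
    (p q : k[X]) (hp : p ≠ 0) (hq : q ≠ 0)
    (hde : X * (1 - X) * (derivative p * q - p * derivative q)
      = C β * (C (w : k) - C ((w : k) + (e : k)) * X) * p * q) :
    (∃ m : ℤ, β * (w : k) = (m : k)) ∧ (∃ m' : ℤ, β * (e : k) = (m' : k)) := by
  constructor
  · -- residue at 0
    set a := p.rootMultiplicity 0 with ha
    set b := q.rootMultiplicity 0 with hb
    set P := p /ₘ (X - C (0:k)) ^ a with hP_def
    set Q := q /ₘ (X - C (0:k)) ^ b with hQ_def
    have hpfac : (X - C (0:k)) ^ a * P = p := pow_mul_divByMonic_rootMultiplicity_eq p 0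
    have hqfac : (X - C (0:k)) ^ b * Q = q := pow_mul_divByMonic_rootMultiplicity_eq q 0
    have hP : P.eval 0 ≠ 0 := eval_divByMonic_pow_rootMultiplicity_ne_zero 0 hp
    have hQ : Q.eval 0 ≠ 0 := eval_divByMonic_pow_rootMultiplicity_ne_zero 0 hq
    have heq0 : (X - C (0:k)) * (1 - X) *
        (derivative ((X - C (0:k)) ^ a * P) * ((X - C (0:k)) ^ b * Q)
          - ((X - C (0:k)) ^ a * P) * derivative ((X - C (0:k)) ^ b * Q))
        = (C β * (C (w : k) - C ((w : k) + (e : k)) * X))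
            * ((X - C (0:k)) ^ a * P) * ((X - C (0:k)) ^ b * Q) := by
      rw [hpfac, hqfac, map_zero, sub_zero]
      linear_combination hde
    have hres := ode_residue (0:k) a b P Q (1 - X)
      (C β * (C (w : k) - C ((w : k) + (e : k)) * X)) hP hQ heq0
    simp only [eval_sub, eval_one, eval_X, sub_zero, one_mul, eval_mul, eval_C,
      mul_zero] at hres
    refine ⟨(a : ℤ) - (b : ℤ), ?_⟩
    push_cast
    linear_combination -hres
  · -- residue at 1
    set a := p.rootMultiplicity 1 with ha
    set b := q.rootMultiplicity 1 with hb
    set P := p /ₘ (X - C (1:k)) ^ a with hP_def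
    set Q := q /ₘ (X - C (1:k)) ^ b with hQ_def
    have hpfac : (X - C (1:k)) ^ a * P = p := pow_mul_divByMonic_rootMultiplicity_eq p 1
    have hqfac : (X - C (1:k)) ^ b * Q = q := pow_mul_divByMonic_rootMultiplicity_eq q 1
    have hP : P.eval 1 ≠ 0 := eval_divByMonic_pow_rootMultiplicity_ne_zero 1 hp
    have hQ : Q.eval 1 ≠ 0 := eval_divByMonic_pow_rootMultiplicity_ne_zero 1 hq
    have heq1 : (X - C (1:k)) * (-X) *
        (derivative ((X - C (1:k)) ^ a * P) * ((X - C (1:k)) ^ b * Q)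
          - ((X - C (1:k)) ^ a * P) * derivative ((X - C (1:k)) ^ b * Q))
        = (C β * (C (w : k) - C ((w : k) + (e : k)) * X))
            * ((X - C (1:k)) ^ a * P) * ((X - C (1:k)) ^ b * Q) := by
      rw [hpfac, hqfac, map_one]
      linear_combination hde
    have hres := ode_residue (1:k) a b P Q (-X)
      (C β * (C (w : k) - C ((w : k) + (e : k)) * X)) hP hQ heq1
    simp only [eval_neg, eval_X, eval_mul, eval_sub, eval_C, eval_one, mul_one] at hres
    refine ⟨(a : ℤ) - (b : ℤ), ?_⟩
    push_cast
    linear_combination hres
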